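/- Let K be the unit square [0,1]² in ℝ², B the closed disk of radius 1/2 centered at the origin, and L the square with vertices (±π√2/8, 0), (0, ±π√2/8) (i.e., (π/4)·K rotated by 45° and centered). Then the mean widths satisfy W(L) = W(B) = 1, and vol(tK + B + L)·vol(tK) > vol(tK + B)² for all sufficiently large t > 0. -/

import Mathlib

open MeasureTheory Real
open scoped Pointwise

/-- The mean width of a set in the Euclidean plane: average over the unit circle of the
width (support value minus the infimal value) in each direction. -/
noncomputable def meanWidth (C : Set (EuclideanSpace ℝ (Fin 2))) : ℝ :=
  (∫ θ in (0 : ℝ)..(2 * π),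
      (sSup ((fun v => (inner ℝ v (((WithLp.equiv 2 (Fin 2 → ℝ)).symm ![Real.cos θ, Real.sin θ])) : ℝ)) '' C)
        - sInf ((fun v => (inner ℝ v (((WithLp.equiv 2 (Fin 2 → ℝ)).symm ![Real.cos θ, Real.sin θ])) : ℝ)) '' C))) / (2 * π)

/-!
Both `B` and `L` are centrally symmetric, so their width in direction `θ` is twice the support
value `h(θ)`, and the mean width is `(1/π) ∫₀^{2π} h`. For the disc of radius `ρ`, `h ≡ ρ`; for the
`ℓ¹`-ball of radius `r`, `h(θ) = r · max(|cos θ|, |sin θ|)`, whose integral over a period is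
`4√2 r`. With `r = π√2/8` both mean widths equal `1`.

For the volumes, `tK + B` lies in the square `[-ρ, t + ρ]²` (`ρ = 1/2`), of area `(t + 2ρ)²`,
while `tK + B + L` contains the cross made of the two `t × (t + 2(ρ + r))` rectangles through
`tK`, of area `t² + 4(ρ + r)t`. Comparing the `t³` coefficients of `(t + 2ρ)⁴` and
`(t² + 4(ρ + r)t)t²`, the inequality holds for large `t` as soon as `ρ < r`, i.e. `π√2 > 4`.
-/

open Set
open scoped InnerProductSpace

local notation "ℝ²" => EuclideanSpace ℝ (Fin 2)

noncomputable def unitVec (θ : ℝ) : ℝ² := (WithLp.equiv 2 (Fin 2 → ℝ)).symm ![cos θ, sin θ]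

lemma norm_unitVec (θ : ℝ) : ‖unitVec θ‖ = 1 := by
  simp [unitVec, EuclideanSpace.norm_eq, Fin.sum_univ_two]

lemma inner_unitVec (v : ℝ²) (θ : ℝ) : ⟪v, unitVec θ⟫_ℝ = v 0 * cos θ + v 1 * sin θ := by
  simp [unitVec, PiLp.inner_apply, Fin.sum_univ_two, mul_comm]

lemma sInf_image_inner_of_neg_mem {E : Type*} [NormedAddCommGroup E] [InnerProductSpace ℝ E]
    {C : Set E} (hC : ∀ v ∈ C, -v ∈ C) (u : E) :
    sInf ((fun v => ⟪v, u⟫_ℝ) '' C) = -sSup ((fun v => ⟪v, u⟫_ℝ) '' C) := by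
  rw [← Real.sInf_neg]
  congr 1
  ext x
  constructor
  · rintro ⟨v, hv, rfl⟩
    exact ⟨-v, hC v hv, by simp [inner_neg_left]⟩
  · rintro ⟨v, hv, hx⟩
    exact ⟨-v, hC v hv, by simp [inner_neg_left, hx]⟩

lemma meanWidth_eq_of_neg_mem {C : Set ℝ²} (hC : ∀ v ∈ C, -v ∈ C) {h : ℝ → ℝ}
    (hh : ∀ θ, IsGreatest ((fun v => ⟪v, unitVec θ⟫_ℝ) '' C) (h θ)) :
    meanWidth C = (∫ θ in (0 : ℝ)..2 * π, h θ) / π := by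
  have hwidth : ∀ θ, sSup ((fun v => ⟪v, unitVec θ⟫_ℝ) '' C)
      - sInf ((fun v => ⟪v, unitVec θ⟫_ℝ) '' C) = 2 * h θ := by
    intro θ
    rw [sInf_image_inner_of_neg_mem hC, (hh θ).csSup_eq]
    ring
  change (∫ θ in (0 : ℝ)..2 * π, sSup ((fun v => ⟪v, unitVec θ⟫_ℝ) '' C)
      - sInf ((fun v => ⟪v, unitVec θ⟫_ℝ) '' C)) / (2 * π) = _
  simp_rw [hwidth, intervalIntegral.integral_const_mul]
  field_simp

lemma isGreatest_image_inner_closedBall {E : Type*} [NormedAddCommGroup E]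
    [InnerProductSpace ℝ E] {ρ : ℝ} (hρ : 0 ≤ ρ) (u : E) :
    IsGreatest ((fun v => ⟪v, u⟫_ℝ) '' Metric.closedBall 0 ρ) (ρ * ‖u‖) := by
  refine ⟨⟨(ρ * ‖u‖⁻¹) • u, ?_, ?_⟩, ?_⟩
  · rw [mem_closedBall_zero_iff, norm_smul, Real.norm_of_nonneg (by positivity), mul_assoc]
    exact mul_le_of_le_one_right hρ (inv_mul_le_one_of_le₀ le_rfl (norm_nonneg u))
  · rcases eq_or_ne u 0 with rfl | hu
    · simp
    · simp only [real_inner_smul_left, real_inner_self_eq_norm_sq]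
      field_simp
  · rintro _ ⟨v, hv, rfl⟩
    exact (real_inner_le_norm v u).trans
      (mul_le_mul_of_nonneg_right (mem_closedBall_zero_iff.mp hv) (norm_nonneg u))

lemma meanWidth_closedBall {ρ : ℝ} (hρ : 0 ≤ ρ) :
    meanWidth (Metric.closedBall (0 : ℝ²) ρ) = 2 * ρ := by
  rw [meanWidth_eq_of_neg_mem (h := fun _ => ρ) (by simp)]
  · simp only [intervalIntegral.integral_const, smul_eq_mul, sub_zero]
    field_simp
  · intro θ
    simpa [norm_unitVec] using isGreatest_image_inner_closedBall hρ (unitVec θ)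

def l1Ball (r : ℝ) : Set ℝ² := {x | |x 0| + |x 1| ≤ r}

lemma isGreatest_image_l1Ball {r : ℝ} (hr : 0 ≤ r) (c s : ℝ) :
    IsGreatest ((fun v : ℝ² => v 0 * c + v 1 * s) '' l1Ball r) (r * max |c| |s|) := by
  refine ⟨?_, ?_⟩
  · have hvertex : ∀ a b : ℝ, |a| + |b| ≤ r →
        a * c + b * s ∈ (fun v : ℝ² => v 0 * c + v 1 * s) '' l1Ball r :=
      fun a b hab => ⟨!₂[a, b], hab, rfl⟩
    rcases max_choice |c| |s| with h | h <;> rw [h]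
    · rcases abs_choice c with hc | hc
      · simpa [hc, abs_of_nonneg hr] using hvertex r 0
      · simpa [hc, abs_of_nonneg hr] using hvertex (-r) 0
    · rcases abs_choice s with hs | hs
      · simpa [hs, abs_of_nonneg hr] using hvertex 0 r
      · simpa [hs, abs_of_nonneg hr] using hvertex 0 (-r)
  · rintro _ ⟨v, hv, rfl⟩
    calc v 0 * c + v 1 * s ≤ |v 0| * |c| + |v 1| * |s| := by
          rw [← abs_mul, ← abs_mul]; exact add_le_add (le_abs_self _) (le_abs_self _)
      _ ≤ |v 0| * max |c| |s| + |v 1| * max |c| |s| := by gcongr <;> simp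
      _ = (|v 0| + |v 1|) * max |c| |s| := by ring
      _ ≤ r * max |c| |s| := by gcongr; exact hv

lemma max_abs_cos_abs_sin_periodic :
    Function.Periodic (fun θ => max |cos θ| |sin θ|) (π / 2) := by
  intro θ
  simp only [cos_add_pi_div_two, sin_add_pi_div_two, abs_neg, max_comm]

lemma max_abs_cos_abs_sin_pi_div_two_sub (θ : ℝ) :
    max |cos (π / 2 - θ)| |sin (π / 2 - θ)| = max |cos θ| |sin θ| := by
  rw [cos_pi_div_two_sub, sin_pi_div_two_sub, max_comm]

lemma max_abs_cos_abs_sin_of_mem_Icc {θ : ℝ} (hθ : θ ∈ Icc 0 (π / 4)) :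
    max |cos θ| |sin θ| = cos θ := by
  obtain ⟨h0, h1⟩ := hθ
  have hpi := pi_pos
  have hsin : 0 ≤ sin θ := sin_nonneg_of_nonneg_of_le_pi h0 (by linarith)
  have hcos : 0 ≤ cos θ := cos_nonneg_of_mem_Icc ⟨by linarith, by linarith⟩
  have hsin_le_cos : sin θ ≤ cos θ :=
    calc sin θ ≤ sin (π / 4) := sin_le_sin_of_le_of_le_pi_div_two (by linarith) (by linarith) h1
      _ = cos (π / 4) := by rw [sin_pi_div_four, cos_pi_div_four]
      _ ≤ cos θ := cos_le_cos_of_nonneg_of_le_pi h0 (by linarith) h1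
  rw [abs_of_nonneg hsin, abs_of_nonneg hcos, max_eq_left hsin_le_cos]

lemma integral_max_abs_cos_abs_sin :
    ∫ θ in (0 : ℝ)..2 * π, max |cos θ| |sin θ| = 4 * √2 := by
  set f : ℝ → ℝ := fun θ => max |cos θ| |sin θ|
  have hf : Continuous f := continuous_cos.abs.max continuous_sin.abs
  have hquarter : ∫ θ in (0 : ℝ)..π / 4, f θ = √2 / 2 := by
    rw [intervalIntegral.integral_congr (g := cos), integral_cos, sin_pi_div_four, sin_zero,
      sub_zero]
    intro θ hθ
    rw [uIcc_of_le (by positivity)] at hθ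
    exact max_abs_cos_abs_sin_of_mem_Icc hθ
  -- the reflection `θ ↦ π/2 - θ` maps `[0, π/4]` onto `[π/4, π/2]` and preserves `f`
  have hsecond : ∫ θ in π / 4..π / 2, f θ = ∫ θ in (0 : ℝ)..π / 4, f θ := by
    have := intervalIntegral.integral_comp_sub_left f (a := 0) (b := π / 4) (π / 2)
    rw [show π / 2 - π / 4 = π / 4 by ring, sub_zero] at this
    simp only [f, max_abs_cos_abs_sin_pi_div_two_sub] at this
    exact this.symm
  have hperiod : ∫ θ in (0 : ℝ)..π / 2, f θ = √2 := by
    rw [← intervalIntegral.integral_add_adjacent_intervals (b := π / 4)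
      (hf.intervalIntegrable _ _) (hf.intervalIntegrable _ _), hsecond, hquarter]
    ring
  have h2pi : 2 * π = 0 + (4 : ℤ) • (π / 2) := by ring
  rw [h2pi, max_abs_cos_abs_sin_periodic.intervalIntegral_add_zsmul_eq 4 0
    (fun a b => hf.intervalIntegrable a b), zero_add, hperiod]
  ring

lemma meanWidth_l1Ball {r : ℝ} (hr : 0 ≤ r) : meanWidth (l1Ball r) = 4 * √2 * r / π := by
  have hsymm : ∀ v ∈ l1Ball r, -v ∈ l1Ball r := fun v hv => by simpa [l1Ball] using hv
  rw [meanWidth_eq_of_neg_mem hsymm (h := fun θ => r * max |cos θ| |sin θ|),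
    intervalIntegral.integral_const_mul, integral_max_abs_cos_abs_sin]
  · ring
  · intro θ
    simpa only [inner_unitVec] using isGreatest_image_l1Ball hr (cos θ) (sin θ)

def coordBox (A B : Set ℝ) : Set ℝ² := {x | x 0 ∈ A ∧ x 1 ∈ B}

lemma coordBox_add_coordBox (A B A' B' : Set ℝ) :
    coordBox A B + coordBox A' B' = coordBox (A + A') (B + B') := by
  ext x
  constructor
  · rintro ⟨y, ⟨hy0, hy1⟩, z, ⟨hz0, hz1⟩, rfl⟩
    exact ⟨⟨y 0, hy0, z 0, hz0, rfl⟩, ⟨y 1, hy1, z 1, hz1, rfl⟩⟩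
  · rintro ⟨⟨a, ha, a', ha', h0⟩, ⟨b, hb, b', hb', h1⟩⟩
    refine ⟨!₂[a, b], ⟨ha, hb⟩, !₂[a', b'], ⟨ha', hb'⟩, ?_⟩
    ext i
    fin_cases i <;> simp [h0, h1]

lemma smul_coordBox (t : ℝ) (A B : Set ℝ) : t • coordBox A B = coordBox (t • A) (t • B) := by
  ext x
  constructor
  · rintro ⟨y, ⟨hy0, hy1⟩, rfl⟩
    exact ⟨⟨y 0, hy0, rfl⟩, ⟨y 1, hy1, rfl⟩⟩
  · rintro ⟨⟨a, ha, h0⟩, ⟨b, hb, h1⟩⟩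
    refine ⟨!₂[a, b], ⟨ha, hb⟩, ?_⟩
    ext i
    fin_cases i <;> simp [← h0, ← h1]

lemma coordBox_inter_coordBox (A B A' B' : Set ℝ) :
    coordBox A B ∩ coordBox A' B' = coordBox (A ∩ A') (B ∩ B') := by
  ext x
  simp only [coordBox, mem_inter_iff, mem_ofPred_eq]
  tauto

lemma coordBox_eq_preimage (A B : Set ℝ) :
    coordBox A B = (MeasurableEquiv.toLp 2 (Fin 2 → ℝ)).symm ⁻¹' univ.pi ![A, B] := by
  ext x
  simp [coordBox, Set.mem_pi, Fin.forall_fin_two, MeasurableEquiv.coe_toLp_symm]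

lemma measurableSet_coordBox {A B : Set ℝ} (hA : MeasurableSet A) (hB : MeasurableSet B) :
    MeasurableSet (coordBox A B) := by
  rw [coordBox_eq_preimage]
  exact (MeasurableEquiv.toLp 2 (Fin 2 → ℝ)).symm.measurable
    (MeasurableSet.univ_pi (by simp [Fin.forall_fin_two, hA, hB]))

lemma volume_coordBox (A B : Set ℝ) : volume (coordBox A B) = volume A * volume B := by
  rw [coordBox_eq_preimage,
    (EuclideanSpace.volume_preserving_symm_measurableEquiv_toLp (Fin 2)).measure_preimage_equiv,
    volume_pi_pi, Fin.prod_univ_two]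
  simp

lemma volume_coordBox_union_coordBox {a b c d : ℝ} (hac : a ≤ c) (hcd : c ≤ d) (hdb : d ≤ b) :
    volume (coordBox (Icc a b) (Icc c d) ∪ coordBox (Icc c d) (Icc a b))
      = ENNReal.ofReal (2 * (b - a) * (d - c) - (d - c) ^ 2) := by
  have h := measure_union_add_inter (μ := volume) (t := coordBox (Icc c d) (Icc a b))
    (coordBox (Icc a b) (Icc c d)) (measurableSet_coordBox measurableSet_Icc measurableSet_Icc)
  have hsub : Icc c d ⊆ Icc a b := Icc_subset_Icc hac hdb
  rw [coordBox_inter_coordBox, inter_eq_right.mpr hsub, inter_eq_left.mpr hsub, volume_coordBox,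
    volume_coordBox, volume_coordBox, Real.volume_Icc, Real.volume_Icc, ← ENNReal.ofReal_mul,
    ← ENNReal.ofReal_mul, ← ENNReal.ofReal_mul, ← ENNReal.ofReal_add] at h
  · rw [ENNReal.eq_sub_of_add_eq ENNReal.ofReal_ne_top h, ← ENNReal.ofReal_sub _ (by positivity)]
    ring_nf
  all_goals nlinarith

lemma smul_unitSquare {t : ℝ} (ht : 0 < t) :
    t • coordBox (Icc 0 1) (Icc 0 1) = coordBox (Icc 0 t) (Icc 0 t) := by
  rw [smul_coordBox, LinearOrderedField.smul_Icc ht]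
  simp

lemma volume_smul_unitSquare {t : ℝ} (ht : 0 < t) :
    volume (t • coordBox (Icc 0 1) (Icc 0 1)) = ENNReal.ofReal (t ^ 2) := by
  rw [smul_unitSquare ht, volume_coordBox, Real.volume_Icc, sub_zero, ← ENNReal.ofReal_mul ht.le,
    sq]

lemma closedBall_subset_coordBox (ρ : ℝ) :
    Metric.closedBall (0 : ℝ²) ρ ⊆ coordBox (Icc (-ρ) ρ) (Icc (-ρ) ρ) := by
  intro x hx
  have h (i : Fin 2) : |x i| ≤ ρ :=
    (PiLp.norm_apply_le x i).trans (mem_closedBall_zero_iff.mp hx)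
  exact ⟨abs_le.mp (h 0), abs_le.mp (h 1)⟩

lemma coordBox_zero_subset_closedBall (ρ : ℝ) :
    coordBox (Icc (-ρ) ρ) 0 ⊆ Metric.closedBall (0 : ℝ²) ρ := by
  rintro x ⟨hx0, hx1⟩
  rw [mem_zero] at hx1
  rw [mem_closedBall_zero_iff, EuclideanSpace.norm_eq, Fin.sum_univ_two, hx1]
  simpa [sqrt_sq_eq_abs, abs_le] using hx0

lemma zero_coordBox_subset_closedBall (ρ : ℝ) :
    coordBox 0 (Icc (-ρ) ρ) ⊆ Metric.closedBall (0 : ℝ²) ρ := by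
  rintro x ⟨hx0, hx1⟩
  rw [mem_zero] at hx0
  rw [mem_closedBall_zero_iff, EuclideanSpace.norm_eq, Fin.sum_univ_two, hx0]
  simpa [sqrt_sq_eq_abs, abs_le] using hx1

lemma coordBox_zero_subset_l1Ball (r : ℝ) : coordBox (Icc (-r) r) 0 ⊆ l1Ball r := by
  rintro x ⟨hx0, hx1⟩
  rw [mem_zero] at hx1
  simpa [l1Ball, hx1, abs_le] using hx0

lemma zero_coordBox_subset_l1Ball (r : ℝ) : coordBox 0 (Icc (-r) r) ⊆ l1Ball r := by
  rintro x ⟨hx0, hx1⟩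
  rw [mem_zero] at hx0
  simpa [l1Ball, hx0, abs_le] using hx1

section Volume

variable {t ρ r : ℝ} (ht : 0 < t) (hρ : 0 ≤ ρ)
include ht hρ

lemma smul_unitSquare_add_closedBall_subset :
    t • coordBox (Icc 0 1) (Icc 0 1) + Metric.closedBall 0 ρ
      ⊆ coordBox (Icc (-ρ) (t + ρ)) (Icc (-ρ) (t + ρ)) := by
  rw [smul_unitSquare ht]
  calc _ ⊆ coordBox (Icc 0 t) (Icc 0 t) + coordBox (Icc (-ρ) ρ) (Icc (-ρ) ρ) :=
        add_subset_add subset_rfl (closedBall_subset_coordBox ρ)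
    _ = _ := by rw [coordBox_add_coordBox, Icc_add_Icc ht.le (by linarith), zero_add]

lemma cross_subset_smul_unitSquare_add_closedBall_add_l1Ball (hr : 0 ≤ r) :
    coordBox (Icc (-(ρ + r)) (t + (ρ + r))) (Icc 0 t)
        ∪ coordBox (Icc 0 t) (Icc (-(ρ + r)) (t + (ρ + r)))
      ⊆ t • coordBox (Icc 0 1) (Icc 0 1) + Metric.closedBall 0 ρ + l1Ball r := by
  have hlong : Icc (-(ρ + r)) (t + (ρ + r)) = Icc 0 t + Icc (-ρ) ρ + Icc (-r) r := by
    rw [Icc_add_Icc ht.le (by linarith), Icc_add_Icc (by linarith) (by linarith)]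
    congr 1 <;> ring
  rw [smul_unitSquare ht]
  apply union_subset
  · calc _ = coordBox (Icc 0 t) (Icc 0 t) + coordBox (Icc (-ρ) ρ) 0 + coordBox (Icc (-r) r) 0 := by
          rw [coordBox_add_coordBox, coordBox_add_coordBox, ← hlong, add_zero, add_zero]
      _ ⊆ _ := add_subset_add (add_subset_add subset_rfl (coordBox_zero_subset_closedBall ρ))
          (coordBox_zero_subset_l1Ball r)
  · calc _ = coordBox (Icc 0 t) (Icc 0 t) + coordBox 0 (Icc (-ρ) ρ) + coordBox 0 (Icc (-r) r) := by
          rw [coordBox_add_coordBox, coordBox_add_coordBox, ← hlong, add_zero, add_zero]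
      _ ⊆ _ := add_subset_add (add_subset_add subset_rfl (zero_coordBox_subset_closedBall ρ))
          (zero_coordBox_subset_l1Ball r)

lemma volume_smul_unitSquare_add_closedBall_le :
    volume (t • coordBox (Icc 0 1) (Icc 0 1) + Metric.closedBall 0 ρ)
      ≤ ENNReal.ofReal ((t + 2 * ρ) ^ 2) := by
  refine (measure_mono (smul_unitSquare_add_closedBall_subset ht hρ)).trans_eq ?_
  rw [volume_coordBox, Real.volume_Icc, ← ENNReal.ofReal_mul (by linarith)]
  ring_nf

lemma ofReal_le_volume_smul_unitSquare_add_closedBall_add_l1Ball (hr : 0 ≤ r) :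
    ENNReal.ofReal (t ^ 2 + 4 * (ρ + r) * t)
      ≤ volume (t • coordBox (Icc 0 1) (Icc 0 1) + Metric.closedBall 0 ρ + l1Ball r) := by
  refine le_of_eq_of_le ?_
    (measure_mono (cross_subset_smul_unitSquare_add_closedBall_add_l1Ball ht hρ hr))
  rw [volume_coordBox_union_coordBox (by linarith) ht.le (by linarith)]
  ring_nf

lemma volume_sq_lt_of_pow_four_lt (hr : 0 ≤ r)
    (h : (t + 2 * ρ) ^ 4 < (t ^ 2 + 4 * (ρ + r) * t) * t ^ 2) :
    volume (t • coordBox (Icc 0 1) (Icc 0 1) + Metric.closedBall 0 ρ) ^ 2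
      < volume (t • coordBox (Icc 0 1) (Icc 0 1) + Metric.closedBall 0 ρ + l1Ball r)
        * volume (t • coordBox (Icc 0 1) (Icc 0 1)) := by
  calc _ ≤ ENNReal.ofReal ((t + 2 * ρ) ^ 2) ^ 2 :=
        pow_le_pow_left' (volume_smul_unitSquare_add_closedBall_le ht hρ) 2
    _ = ENNReal.ofReal ((t + 2 * ρ) ^ 4) := by rw [← ENNReal.ofReal_pow (by positivity)]; ring_nf
    _ < ENNReal.ofReal ((t ^ 2 + 4 * (ρ + r) * t) * t ^ 2) :=
        (ENNReal.ofReal_lt_ofReal_iff (by positivity)).mpr h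
    _ = ENNReal.ofReal (t ^ 2 + 4 * (ρ + r) * t) * ENNReal.ofReal (t ^ 2) :=
        ENNReal.ofReal_mul (by positivity)
    _ ≤ _ := by
        rw [volume_smul_unitSquare ht]
        gcongr
        exact ofReal_le_volume_smul_unitSquare_add_closedBall_add_l1Ball ht hρ hr

end Volume

lemma exists_pow_four_lt {w : ℝ} (hw : 1 < w) :
    ∃ T, ∀ t : ℝ, T < t → (t + 1) ^ 4 < (t ^ 2 + 4 * w * t) * t ^ 2 := by
  refine ⟨max 1 (3 / (w - 1)), fun t ht => ?_⟩
  have ht1 : 1 < t := (le_max_left _ _).trans_lt ht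
  have hwt : 3 < (w - 1) * t := by
    rw [← div_lt_iff₀' (by linarith)]
    exact (le_max_right _ _).trans_lt ht
  nlinarith [mul_lt_mul_of_pos_right hwt (by positivity : (0 : ℝ) < t ^ 2)]

lemma four_lt_pi_mul_sqrt_two : 4 < π * √2 := by
  have hsqrt : 4 / 3 < √2 := by rw [lt_sqrt (by norm_num)]; norm_num
  nlinarith [pi_gt_three]

theorem stmt_17 :
    let K : Set (EuclideanSpace ℝ (Fin 2)) := {x | ∀ i, x i ∈ Set.Icc (0 : ℝ) 1}
    let B : Set (EuclideanSpace ℝ (Fin 2)) := Metric.closedBall 0 (1 / 2)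
    let L : Set (EuclideanSpace ℝ (Fin 2)) := {x | |x 0| + |x 1| ≤ π * Real.sqrt 2 / 8}
    meanWidth L = 1 ∧ meanWidth B = 1 ∧
      ∃ T : ℝ, ∀ t : ℝ, T < t →
        volume (t • K + B) ^ 2 < volume (t • K + B + L) * volume (t • K) := by
  intro K B L
  have hK : K = coordBox (Icc 0 1) (Icc 0 1) := by
    ext x
    simp [K, coordBox, Fin.forall_fin_two]
  have hr : 0 ≤ π * √2 / 8 := by positivity
  refine ⟨?_, by norm_num [B, meanWidth_closedBall], ?_⟩
  · rw [show L = l1Ball (π * √2 / 8) from rfl, meanWidth_l1Ball hr]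
    field_simp
    norm_num
  · obtain ⟨T, hT⟩ := exists_pow_four_lt (w := 1 / 2 + π * √2 / 8)
      (by linarith [four_lt_pi_mul_sqrt_two])
    refine ⟨max T 0, fun t ht => ?_⟩
    rw [hK]
    apply volume_sq_lt_of_pow_four_lt ((le_max_right _ _).trans_lt ht) one_half_pos.le hr
    simpa using hT t ((le_max_left _ _).trans_lt ht)
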